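/- (Proposition 3.2, part 1.) Assume [A1], [A2], λ > 0, q > 0 and k ≥ 1. Let φ : ℝ → [0,∞) be absolutely continuous with: φ(0) > 0; φ of linear growth with φ(y) ≤ c + y for all y ≥ 0 and some constant c; for almost every x ≥ 0, 1 ≤ φ'(x) ≤ k and 𝓛^u φ(x) ≤ 0 for every u ∈ 𝓡; and for almost every x < 0 either φ(x) = 0 or 1 ≤ φ'(x) ≤ k. Set x₀ := sup{x ∈ ℝ : φ(x) = 0} ∈ (−∞, 0). Then there exist a constant c̃ ≥ 0 (independent of n) and a sequence (φ_n)_{n≥1} of non-decreasing C¹ functions on ℝ such that: (a) φ(x) ≤ φ_n(x) ≤ φ(x) + c̃/n for all x ∈ ℝ; (b) 1 ≤ φ_n'(x) ≤ k for all x ∈ [x₀, ∞); (c) φ_n' converges to φ' pointwise almost everywhere on [x₀, ∞) as n → ∞; and (d) 𝓛^u φ_n(x) ≤ 0 for every x ≥ 0 and every u ∈ 𝓡. -/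

import Mathlib

open MeasureTheory Set Real Filter

noncomputable section

/-- A retention (reinsurance) policy: a Borel measurable function `u` with
`0 ≤ u y ≤ y` for all `y ≥ 0`. -/
def IsRetention (u : ℝ → ℝ) : Prop :=
  Measurable u ∧ ∀ y : ℝ, 0 ≤ y → 0 ≤ u y ∧ u y ≤ y

/-- The inner supremum `sup_{0 ≤ y ≤ z} |p(y,x) − p(y,x')|` appearing in `[p]₁`. -/
def supDiff (p : ℝ → ℝ → ℝ) (x x' z : ℝ) : ℝ :=
  sSup ((fun y => |p y x - p y x'|) '' Icc 0 z)

/-- Assumption [A1]: `p ≥ 0` and `p` is non-decreasing in each argument on `[0,∞)`. -/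
def AssumptionA1 (p : ℝ → ℝ → ℝ) : Prop :=
  (∀ y x : ℝ, 0 ≤ y → 0 ≤ x → 0 ≤ p y x) ∧
  (∀ x : ℝ, 0 ≤ x → MonotoneOn (fun y => p y x) (Ici 0)) ∧
  (∀ y : ℝ, 0 ≤ y → MonotoneOn (fun x => p y x) (Ici 0))

/-- Assumption [A2], with the real constant `P1` standing for the finite quantity `[p]₁`:
`p` is (jointly) measurable, uniformly continuous on `[0,∞)²`,
`‖p‖₀ = ∫ p(y,0) dF(y)` is finite, and the defining bound of `[p]₁` holds. -/
def AssumptionA2 (F : Measure ℝ) (p : ℝ → ℝ → ℝ) (P1 : ℝ) : Prop :=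
  Measurable (fun z : ℝ × ℝ => p z.1 z.2) ∧
  UniformContinuousOn (fun z : ℝ × ℝ => p z.1 z.2) (Ici 0 ×ˢ Ici 0) ∧
  Integrable (fun y => p y 0) F ∧
  0 ≤ P1 ∧
  (∀ x x' : ℝ, 0 ≤ x → 0 ≤ x' → Integrable (fun z => supDiff p x x' z) F) ∧
  (∀ x x' : ℝ, 0 ≤ x → 0 ≤ x' → (∫ z, supDiff p x x' z ∂F) ≤ P1 * |x - x'|)

/-- The generator `𝓛^u ψ(x) = p^u(x) ψ'(x) + λ ∫ ψ(x − u(y)) dF(y) − (λ+q) ψ(x)`,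
where `ψ'` denotes an (a.e.) derivative of `ψ`. -/
def gen (F : MeasureTheory.Measure ℝ) (p : ℝ → ℝ → ℝ) (lam q : ℝ) (u : ℝ → ℝ)
    (ψ ψ' : ℝ → ℝ) (x : ℝ) : ℝ :=
  (∫ y, p (u y) x ∂F) * ψ' x + lam * (∫ y, ψ (x - u y) ∂F) - (lam + q) * ψ x

/-!
The approximants are the forward averages `φₙ x = n ∫_x^{x+1/n} φ`. As `φ` vanishes left of `x₀`
and has slope in `[1, k]` to its right, `φₙ` is monotone and `C¹` with
`φₙ' x = n (φ (x + 1/n) - φ x) ∈ [1, k]` on `[x₀, ∞)`, and `φ ≤ φₙ ≤ φ + k/n`; Lebesgue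
differentiation gives `φₙ' → φ'` a.e. By Fubini, `𝓛^u φₙ x` is the average over `s ∈ (0, 1/n]`
of `𝓛^u φ (x + s)` with the premium frozen at `p^u(x)`. Since `p^u` is non-decreasing and
`φ' ≥ 0`, freezing the premium can only decrease the generator, so `𝓛^u φₙ x ≤ 0`.
-/

open Topology

section AbsolutelyContinuous

variable {φ φ' : ℝ → ℝ}

theorem eq_const_add_integral (hAC : ∀ a b, φ b - φ a = ∫ t in a..b, φ' t) :
    φ = fun x => φ 0 + ∫ t in (0 : ℝ)..x, φ' t := by
  funext x; linarith [hAC 0 x]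

theorem continuous_of_sub_eq_integral (hloc : ∀ a b, IntervalIntegrable φ' volume a b)
    (hAC : ∀ a b, φ b - φ a = ∫ t in a..b, φ' t) : Continuous φ := by
  rw [eq_const_add_integral hAC]
  exact continuous_const.add (intervalIntegral.continuous_primitive hloc 0)

theorem ae_hasDerivAt_of_sub_eq_integral (hloc : ∀ a b, IntervalIntegrable φ' volume a b)
    (hAC : ∀ a b, φ b - φ a = ∫ t in a..b, φ' t) : ∀ᵐ x, HasDerivAt φ (φ' x) x := by
  have hli : LocallyIntegrable φ' volume := fun x =>
    ⟨Ioc (x - 1) (x + 1), Ioc_mem_nhds (by linarith) (by linarith), (hloc _ _).1⟩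
  filter_upwards [LocallyIntegrable.ae_hasDerivAt_integral hli] with x hx
  rw [eq_const_add_integral hAC]
  exact (hx 0).const_add _

theorem sub_eq_setIntegral_Ioo (hAC : ∀ a b, φ b - φ a = ∫ t in a..b, φ' t) {a b : ℝ}
    (hab : a ≤ b) : φ b - φ a = ∫ t in Ioo a b, φ' t := by
  rw [hAC, intervalIntegral.integral_of_le hab, integral_Ioc_eq_integral_Ioo]

theorem mul_sub_le_sub_of_ae_le (hloc : ∀ a b, IntervalIntegrable φ' volume a b)
    (hAC : ∀ a b, φ b - φ a = ∫ t in a..b, φ' t) {a b m : ℝ} (hab : a ≤ b)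
    (hm : ∀ᵐ t, t ∈ Ioo a b → m ≤ φ' t) : m * (b - a) ≤ φ b - φ a := by
  rw [sub_eq_setIntegral_Ioo hAC hab]
  calc m * (b - a) = ∫ _ in Ioo a b, m := by simp [hab, mul_comm]
    _ ≤ ∫ t in Ioo a b, φ' t :=
      setIntegral_mono_ae_restrict (integrableOn_const measure_Ioo_lt_top.ne)
        ((hloc a b).1.mono_set Ioo_subset_Ioc_self)
        ((ae_restrict_iff' measurableSet_Ioo).2 hm)

theorem sub_le_mul_sub_of_ae_le (hloc : ∀ a b, IntervalIntegrable φ' volume a b)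
    (hAC : ∀ a b, φ b - φ a = ∫ t in a..b, φ' t) {a b M : ℝ} (hab : a ≤ b)
    (hM : ∀ᵐ t, t ∈ Ioo a b → φ' t ≤ M) : φ b - φ a ≤ M * (b - a) := by
  rw [sub_eq_setIntegral_Ioo hAC hab]
  calc ∫ t in Ioo a b, φ' t ≤ ∫ _ in Ioo a b, M :=
      setIntegral_mono_ae_restrict ((hloc a b).1.mono_set Ioo_subset_Ioc_self)
        (integrableOn_const measure_Ioo_lt_top.ne)
        ((ae_restrict_iff' measurableSet_Ioo).2 hM)
    _ = M * (b - a) := by simp [hab, mul_comm]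

theorem monotone_of_ae_eq_zero_or_nonneg (hloc : ∀ a b, IntervalIntegrable φ' volume a b)
    (hAC : ∀ a b, φ b - φ a = ∫ t in a..b, φ' t) (hpos : ∀ x, 0 ≤ φ x)
    (h : ∀ᵐ t, φ t = 0 ∨ 0 ≤ φ' t) : Monotone φ := by
  intro a b hab
  by_contra! hba
  set W := {t | φ t ≤ φ b} ∩ Icc a b
  have hW : IsClosed W :=
    (isClosed_le (continuous_of_sub_eq_integral hloc hAC) continuous_const).inter isClosed_Icc
  have hbddW : BddBelow W := ⟨a, fun t ht => ht.2.1⟩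
  obtain ⟨hw, haw, hwb⟩ : sInf W ∈ W := hW.csInf_mem ⟨b, le_refl (φ b), hab, le_rfl⟩ hbddW
  replace hw : φ (sInf W) ≤ φ b := hw
  replace haw : a < sInf W := haw.lt_of_ne fun h => by rw [← h] at hw; linarith
  -- left of `sInf W` the function stays above `φ b ≥ 0`, so `φ' ≥ 0` there
  have hmono := mul_sub_le_sub_of_ae_le hloc hAC haw.le (m := 0) (by
    filter_upwards [h] with t ht hmem
    refine ht.resolve_left fun h0 => ?_
    have htW : t ∈ W := ⟨by simp [h0, hpos b], hmem.1.le, hmem.2.le.trans hwb⟩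
    exact (csInf_le hbddW htW).not_gt hmem.2)
  linarith

end AbsolutelyContinuous

section ZeroSet

variable {φ φ' : ℝ → ℝ}

theorem zeroSet_nonempty (hloc : ∀ a b, IntervalIntegrable φ' volume a b)
    (hAC : ∀ a b, φ b - φ a = ∫ t in a..b, φ' t) (hpos : ∀ x, 0 ≤ φ x)
    (h : ∀ᵐ t, φ t = 0 ∨ 1 ≤ φ' t) : {x | φ x = 0}.Nonempty := by
  by_contra! hZ
  have hne (t : ℝ) : φ t ≠ 0 := fun ht => hZ.subset ht
  have := mul_sub_le_sub_of_ae_le hloc hAC (a := -φ 0 - 1) (b := 0) (m := 1)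
    (by linarith [hpos 0]) (by filter_upwards [h] with t ht _ using ht.resolve_left (hne t))
  linarith [hpos (-φ 0 - 1)]

theorem exists_isGreatest_zeroSet (hφ : Continuous φ) (hmono : Monotone φ) (hφ0 : 0 < φ 0)
    (hZ : {x | φ x = 0}.Nonempty) : ∃ x₀ < 0, IsGreatest {x | φ x = 0} x₀ := by
  have hneg : ∀ z ∈ {x | φ x = 0}, z < 0 := fun z hz =>
    not_le.1 fun h0 => (hφ0.trans_le (hmono h0)).ne' hz
  have hbdd : BddAbove {x | φ x = 0} := ⟨0, fun z hz => (hneg z hz).le⟩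
  have hmem := (isClosed_eq hφ continuous_const).csSup_mem hZ hbdd
  exact ⟨_, hneg _ hmem, hmem, fun z hz => le_csSup hbdd hz⟩

theorem slope_bounds_of_upperBound_zeroSet_le (hloc : ∀ a b, IntervalIntegrable φ' volume a b)
    (hAC : ∀ a b, φ b - φ a = ∫ t in a..b, φ' t) {k x₀ : ℝ}
    (h : ∀ᵐ t, φ t = 0 ∨ (1 ≤ φ' t ∧ φ' t ≤ k)) (hx₀ : x₀ ∈ upperBounds {x | φ x = 0})
    {a b : ℝ} (ha : x₀ ≤ a) (hab : a ≤ b) :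
    b - a ≤ φ b - φ a ∧ φ b - φ a ≤ k * (b - a) := by
  have hIoo : ∀ᵐ t, t ∈ Ioo a b → 1 ≤ φ' t ∧ φ' t ≤ k := by
    filter_upwards [h] with t ht hmem
    exact ht.resolve_left fun h0 => (hx₀ h0).not_gt (ha.trans_lt hmem.1)
  exact ⟨by simpa using mul_sub_le_sub_of_ae_le hloc hAC hab (hIoo.mono fun t ht h => (ht h).1),
    sub_le_mul_sub_of_ae_le hloc hAC hab (hIoo.mono fun t ht h => (ht h).2)⟩

theorem le_add_mul_of_slope_le (hmono : Monotone φ) (hpos : ∀ x, 0 ≤ φ x) {x₀ k : ℝ}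
    (hx₀ : φ x₀ = 0) (hk : 0 ≤ k) (hslope : ∀ a b, x₀ ≤ a → a ≤ b → φ b - φ a ≤ k * (b - a))
    (x : ℝ) {h : ℝ} (hh : 0 ≤ h) : φ (x + h) ≤ φ x + k * h := by
  have hmax (y : ℝ) : φ y = φ (max y x₀) := by
    rcases le_total y x₀ with hy | hy
    · rw [max_eq_right hy, hx₀]; exact le_antisymm (hx₀ ▸ hmono hy) (hpos y)
    · rw [max_eq_left hy]
  have hgap : max (x + h) x₀ - max x x₀ ≤ h := by
    have := le_max_left x x₀; have := le_max_right x x₀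
    linarith [max_le (a := x + h) (b := x₀) (c := max x x₀ + h) (by linarith) (by linarith)]
  rw [hmax (x + h), hmax x]
  nlinarith [hslope _ _ (le_max_right x x₀) (max_le_max_right x₀ (le_add_of_nonneg_right hh))]

end ZeroSet

def forwardAverage (φ : ℝ → ℝ) (h x : ℝ) : ℝ :=
  h⁻¹ * ∫ t in x..x + h, φ t

section ForwardAverage

variable {φ : ℝ → ℝ}

theorem forwardAverage_eq_setIntegral (φ : ℝ → ℝ) {h : ℝ} (hh : 0 ≤ h) (x : ℝ) :
    forwardAverage φ h x = h⁻¹ * ∫ s in Ioc 0 h, φ (x + s) := by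
  rw [forwardAverage, ← intervalIntegral.integral_of_le hh,
    intervalIntegral.integral_comp_add_left, add_zero]

theorem hasDerivAt_forwardAverage (hφ : Continuous φ) (h x : ℝ) :
    HasDerivAt (forwardAverage φ h) (h⁻¹ * (φ (x + h) - φ x)) x := by
  have hprim (z : ℝ) : HasDerivAt (fun z => ∫ t in (0 : ℝ)..z, φ t) (φ z) z :=
    (hφ.integral_hasStrictDerivAt 0 z).hasDerivAt
  have heq : forwardAverage φ h =
      fun z => h⁻¹ * ((∫ t in (0 : ℝ)..z + h, φ t) - ∫ t in (0 : ℝ)..z, φ t) := by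
    funext z
    rw [forwardAverage, intervalIntegral.integral_interval_sub_left
      (hφ.intervalIntegrable _ _) (hφ.intervalIntegrable _ _)]
  rw [heq]
  exact (((hprim (x + h)).comp_add_const x h).sub (hprim x)).const_mul _

theorem deriv_forwardAverage (hφ : Continuous φ) (h x : ℝ) :
    deriv (forwardAverage φ h) x = h⁻¹ * (φ (x + h) - φ x) :=
  (hasDerivAt_forwardAverage hφ h x).deriv

theorem contDiff_one_forwardAverage (hφ : Continuous φ) (h : ℝ) :
    ContDiff ℝ 1 (forwardAverage φ h) := by
  rw [contDiff_one_iff_deriv]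
  refine ⟨fun x => (hasDerivAt_forwardAverage hφ h x).differentiableAt, ?_⟩
  rw [funext (deriv_forwardAverage hφ h)]
  fun_prop

theorem monotone_forwardAverage (hmono : Monotone φ) (hφ : Continuous φ) {h : ℝ} (hh : 0 ≤ h) :
    Monotone (forwardAverage φ h) :=
  monotone_of_deriv_nonneg (fun x => (hasDerivAt_forwardAverage hφ h x).differentiableAt)
    fun x => by
      rw [deriv_forwardAverage hφ]
      exact mul_nonneg (inv_nonneg.2 hh) (sub_nonneg.2 (hmono (le_add_of_nonneg_right hh)))

theorem le_forwardAverage (hmono : Monotone φ) {h : ℝ} (hh : 0 < h) (x : ℝ) :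
    φ x ≤ forwardAverage φ h x := by
  have hint : h * φ x ≤ ∫ t in x..x + h, φ t := by
    have := intervalIntegral.integral_mono_on (μ := volume) (by linarith) intervalIntegrable_const
      (hmono.intervalIntegrable (a := x) (b := x + h)) fun t ht => hmono ht.1
    simpa only [intervalIntegral.integral_const, smul_eq_mul, add_sub_cancel_left] using this
  rw [forwardAverage, le_inv_mul_iff₀ hh]
  exact hint

theorem forwardAverage_le (hmono : Monotone φ) {h : ℝ} (hh : 0 < h) (x : ℝ) :
    forwardAverage φ h x ≤ φ (x + h) := by
  have hint : ∫ t in x..x + h, φ t ≤ h * φ (x + h) := by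
    have := intervalIntegral.integral_mono_on (μ := volume) (by linarith)
      (hmono.intervalIntegrable (a := x) (b := x + h)) intervalIntegrable_const
      fun t ht => hmono ht.2
    simpa only [intervalIntegral.integral_const, smul_eq_mul, add_sub_cancel_left] using this
  rw [forwardAverage, inv_mul_le_iff₀ hh]
  exact hint

end ForwardAverage

section Premium

variable {F : Measure ℝ} {p : ℝ → ℝ → ℝ} {u : ℝ → ℝ}

theorem sub_le_supDiff (hA1 : AssumptionA1 p) {x y : ℝ} (hx : 0 ≤ x) (hy : 0 ≤ y) :
    p y x - p y 0 ≤ supDiff p x 0 y := by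
  obtain ⟨hnonneg, hmono_y, hmono_x⟩ := hA1
  have hbdd : BddAbove ((fun y' => |p y' x - p y' 0|) '' Icc 0 y) := by
    refine ⟨p y x, ?_⟩
    rintro _ ⟨y', hy', rfl⟩
    have h0 : 0 ≤ p y' 0 := hnonneg y' 0 hy'.1 le_rfl
    have hx' : p y' 0 ≤ p y' x := hmono_x y' hy'.1 (mem_Ici.2 le_rfl) hx hx
    have hy'' : p y' x ≤ p y x := hmono_y x hx hy'.1 hy hy'.2
    show |p y' x - p y' 0| ≤ p y x
    rw [abs_of_nonneg (by linarith)]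
    linarith
  exact (le_abs_self _).trans (le_csSup hbdd (mem_image_of_mem _ ⟨hy, le_rfl⟩))

theorem integrable_premium {P1 : ℝ} (hA1 : AssumptionA1 p) (hA2 : AssumptionA2 F p P1)
    (hF : ∀ᵐ y ∂F, 0 ≤ y) (hu : IsRetention u) {x : ℝ} (hx : 0 ≤ x) :
    Integrable (fun y => p (u y) x) F := by
  obtain ⟨hmeas, -, hint0, -, hintSup, -⟩ := hA2
  refine (hint0.add (hintSup x 0 hx le_rfl)).mono'
    (hmeas.comp (hu.1.prodMk measurable_const)).aestronglyMeasurable ?_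
  filter_upwards [hF] with y hy
  obtain ⟨huy0, huy⟩ := hu.2 y hy
  rw [Real.norm_eq_abs, abs_of_nonneg (hA1.1 _ _ huy0 hx), Pi.add_apply]
  linarith [hA1.2.1 x hx huy0 hy huy, sub_le_supDiff hA1 hx hy]

theorem premium_mono {P1 : ℝ} (hA1 : AssumptionA1 p) (hA2 : AssumptionA2 F p P1)
    (hF : ∀ᵐ y ∂F, 0 ≤ y) (hu : IsRetention u) {x x' : ℝ} (hx : 0 ≤ x) (hxx' : x ≤ x') :
    ∫ y, p (u y) x ∂F ≤ ∫ y, p (u y) x' ∂F := by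
  refine integral_mono_ae (integrable_premium hA1 hA2 hF hu hx)
    (integrable_premium hA1 hA2 hF hu (hx.trans hxx')) ?_
  filter_upwards [hF] with y hy
  exact hA1.2.2 (u y) (hu.2 y hy).1 hx (hx.trans hxx') hxx'

end Premium

section Generator

variable {F : Measure ℝ} {p : ℝ → ℝ → ℝ} {u φ φ' : ℝ → ℝ}

theorem integrable_prod_comp_add_sub [IsFiniteMeasure F] (hφ : Continuous φ) {c : ℝ}
    (hgrow : ∀ z, |φ z| ≤ c * (1 + |z|)) (hmean : Integrable (fun y => y) F) (hu : Measurable u)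
    (hub : ∀ᵐ y ∂F, |u y| ≤ |y|) (x : ℝ) {h : ℝ} :
    Integrable (fun z : ℝ × ℝ => φ (x + z.2 - u z.1)) (F.prod (volume.restrict (Ioc 0 h))) := by
  have hc : 0 ≤ c := by simpa using (abs_nonneg _).trans (hgrow 0)
  have hbound : Integrable (fun y => c * (1 + |x| + h) + c * |y|) F :=
    (integrable_const _).add (hmean.abs.const_mul c)
  refine (hbound.comp_fst _).mono' ?_ ?_
  · exact (hφ.measurable.comp ((measurable_const.add measurable_snd).sub
      (hu.comp measurable_fst))).aestronglyMeasurable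
  filter_upwards [Measure.quasiMeasurePreserving_fst.ae hub,
    Measure.quasiMeasurePreserving_snd.ae (ae_restrict_mem measurableSet_Ioc)] with z hu hs
  have harg : |x + z.2 - u z.1| ≤ |x| + h + |z.1| := by
    have := abs_sub (x + z.2) (u z.1)
    have := abs_add_le x z.2
    rw [abs_of_pos hs.1] at this
    linarith [hs.2]
  calc ‖φ (x + z.2 - u z.1)‖ ≤ c * (1 + |x + z.2 - u z.1|) := hgrow _
    _ ≤ c * (1 + |x| + h) + c * |z.1| := by nlinarith

theorem deriv_forwardAverage_eq_setIntegral (hloc : ∀ a b, IntervalIntegrable φ' volume a b)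
    (hAC : ∀ a b, φ b - φ a = ∫ t in a..b, φ' t) {h : ℝ} (hh : 0 ≤ h) (x : ℝ) :
    deriv (forwardAverage φ h) x = h⁻¹ * ∫ s in Ioc 0 h, φ' (x + s) := by
  rw [deriv_forwardAverage (continuous_of_sub_eq_integral hloc hAC), hAC,
    ← intervalIntegral.integral_of_le hh, intervalIntegral.integral_comp_add_left, add_zero]

theorem gen_forwardAverage_eq [SFinite F] (hloc : ∀ a b, IntervalIntegrable φ' volume a b)
    (hAC : ∀ a b, φ b - φ a = ∫ t in a..b, φ' t) {x h : ℝ} (hh : 0 ≤ h)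
    (hint : Integrable (fun z : ℝ × ℝ => φ (x + z.2 - u z.1)) (F.prod (volume.restrict (Ioc 0 h))))
    (lam q : ℝ) :
    gen F p lam q u (forwardAverage φ h) (deriv (forwardAverage φ h)) x =
      h⁻¹ * ∫ s in Ioc 0 h, ((∫ y, p (u y) x ∂F) * φ' (x + s) +
        lam * (∫ y, φ (x + s - u y) ∂F) - (lam + q) * φ (x + s)) := by
  have hφ := continuous_of_sub_eq_integral hloc hAC
  have hmid : ∫ y, forwardAverage φ h (x - u y) ∂F =
      h⁻¹ * ∫ s in Ioc 0 h, ∫ y, φ (x + s - u y) ∂F := by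
    simp_rw [forwardAverage_eq_setIntegral φ hh, sub_add_eq_add_sub, integral_const_mul]
    rw [integral_integral_swap hint]
  have hint' : IntegrableOn (fun s => φ' (x + s)) (Ioc 0 h) := by
    simpa using ((hloc x (x + h)).comp_add_left x).1
  have hint_mid : IntegrableOn (fun s => ∫ y, φ (x + s - u y) ∂F) (Ioc 0 h) :=
    hint.integral_prod_right
  have hint_φ : IntegrableOn (fun s => φ (x + s)) (Ioc 0 h) :=
    (hφ.comp (continuous_const_add x)).integrableOn_Ioc
  rw [gen, deriv_forwardAverage_eq_setIntegral hloc hAC hh, hmid,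
    forwardAverage_eq_setIntegral φ hh, integral_sub, integral_add, integral_const_mul,
    integral_const_mul, integral_const_mul]
  · ring
  · exact hint'.const_mul _
  · exact hint_mid.const_mul _
  · exact (hint'.const_mul _).add (hint_mid.const_mul _)
  · exact hint_φ.const_mul _

theorem gen_forwardAverage_nonpos [IsFiniteMeasure F] {P1 lam q c : ℝ} (hA1 : AssumptionA1 p)
    (hA2 : AssumptionA2 F p P1) (hF : ∀ᵐ y ∂F, 0 ≤ y) (hmean : Integrable (fun y => y) F)
    (hu : IsRetention u) (hloc : ∀ a b, IntervalIntegrable φ' volume a b)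
    (hAC : ∀ a b, φ b - φ a = ∫ t in a..b, φ' t) (hgrow : ∀ z, |φ z| ≤ c * (1 + |z|))
    (hsuper : ∀ᵐ t, 0 ≤ t → 0 ≤ φ' t ∧ gen F p lam q u φ φ' t ≤ 0) {x h : ℝ} (hx : 0 ≤ x)
    (hh : 0 < h) : gen F p lam q u (forwardAverage φ h) (deriv (forwardAverage φ h)) x ≤ 0 := by
  have hub : ∀ᵐ y ∂F, |u y| ≤ |y| := by
    filter_upwards [hF] with y hy
    rw [abs_of_nonneg hy, abs_of_nonneg (hu.2 y hy).1]
    exact (hu.2 y hy).2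
  rw [gen_forwardAverage_eq hloc hAC hh.le (integrable_prod_comp_add_sub
    (continuous_of_sub_eq_integral hloc hAC) hgrow hmean hu.1 hub x)]
  refine mul_nonpos_of_nonneg_of_nonpos (inv_nonneg.2 hh.le) (integral_nonpos_of_ae ?_)
  refine (ae_restrict_iff' measurableSet_Ioc).2 ?_
  filter_upwards [(measurePreserving_add_left volume x).quasiMeasurePreserving.ae hsuper]
    with s hs hmem
  obtain ⟨hφ'_nonneg, hgen⟩ := hs (by linarith [hmem.1])
  have hprem := premium_mono hA1 hA2 hF hu hx (le_add_of_nonneg_right hmem.1.le)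
  rw [gen] at hgen
  rw [Pi.zero_apply]
  linarith [mul_le_mul_of_nonneg_right hprem hφ'_nonneg]

theorem ae_tendsto_deriv_forwardAverage (hloc : ∀ a b, IntervalIntegrable φ' volume a b)
    (hAC : ∀ a b, φ b - φ a = ∫ t in a..b, φ' t) :
    ∀ᵐ x, Tendsto (fun n : ℕ => deriv (forwardAverage φ (n : ℝ)⁻¹) x) atTop (𝓝 (φ' x)) := by
  filter_upwards [ae_hasDerivAt_of_sub_eq_integral hloc hAC] with x hx
  simpa [deriv_forwardAverage (continuous_of_sub_eq_integral hloc hAC), Function.comp_def]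
    using hx.tendsto_slope_zero_right.comp
      (tendsto_inv_atTop_nhdsGT_zero.comp tendsto_natCast_atTop_atTop)

end Generator

theorem supersolution_smooth_approximation_general
    (F : Measure ℝ) [IsProbabilityMeasure F] (hF : F (Iio 0) = 0)
    (hmean : Integrable (fun y : ℝ => y) F)
    (p : ℝ → ℝ → ℝ) (P1 : ℝ) (hA1 : AssumptionA1 p) (hA2 : AssumptionA2 F p P1)
    (lam q k : ℝ) (hk : 1 ≤ k)
    (φ φ' : ℝ → ℝ)
    (hpos : ∀ x : ℝ, 0 ≤ φ x)
    (hφ0 : 0 < φ 0)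
    (hloc : ∀ a b : ℝ, IntervalIntegrable φ' volume a b)
    (hAC : ∀ a b : ℝ, φ b - φ a = ∫ t in a..b, φ' t)
    (hgrow : ∃ c : ℝ, ∀ x : ℝ, φ x ≤ c * (1 + |x|))
    (hax_pos : ∀ᵐ x : ℝ ∂volume, 0 ≤ x → (1 ≤ φ' x ∧ φ' x ≤ k) ∧
      ∀ u : ℝ → ℝ, IsRetention u → gen F p lam q u φ φ' x ≤ 0)
    (hax_neg : ∀ᵐ x : ℝ ∂volume, x < 0 → (φ x = 0 ∨ (1 ≤ φ' x ∧ φ' x ≤ k))) :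
    ({x : ℝ | φ x = 0}.Nonempty ∧ BddAbove {x : ℝ | φ x = 0} ∧
        sSup {x : ℝ | φ x = 0} < 0) ∧
    ∃ ctil : ℝ, 0 ≤ ctil ∧ ∃ φn : ℕ → ℝ → ℝ,
      (∀ n : ℕ, 1 ≤ n →
        Monotone (φn n) ∧ ContDiff ℝ 1 (φn n) ∧
        (∀ x : ℝ, φ x ≤ φn n x ∧ φn n x ≤ φ x + ctil / n) ∧
        (∀ x : ℝ, sSup {y : ℝ | φ y = 0} ≤ x →
          1 ≤ deriv (φn n) x ∧ deriv (φn n) x ≤ k) ∧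
        (∀ x : ℝ, 0 ≤ x → ∀ u : ℝ → ℝ, IsRetention u →
          gen F p lam q u (φn n) (deriv (φn n)) x ≤ 0)) ∧
      (∀ᵐ x : ℝ ∂volume, sSup {y : ℝ | φ y = 0} ≤ x →
        Tendsto (fun n : ℕ => deriv (φn n) x) atTop (nhds (φ' x))) := by
  have hF' : ∀ᵐ y ∂F, 0 ≤ y :=
    (measure_eq_zero_iff_ae_notMem.1 hF).mono fun y hy => not_lt.1 hy
  have hφ := continuous_of_sub_eq_integral hloc hAC
  have hae : ∀ᵐ t, φ t = 0 ∨ (1 ≤ φ' t ∧ φ' t ≤ k) := by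
    filter_upwards [hax_pos, hax_neg] with t hp hn
    rcases le_or_gt 0 t with ht | ht
    exacts [Or.inr (hp ht).1, hn ht]
  have hmono : Monotone φ := monotone_of_ae_eq_zero_or_nonneg hloc hAC hpos
    (hae.mono fun t ht => ht.imp_right fun h => zero_le_one.trans h.1)
  obtain ⟨x₀, hx₀_neg, hx₀⟩ := exists_isGreatest_zeroSet hφ hmono hφ0
    (zeroSet_nonempty hloc hAC hpos (hae.mono fun t => Or.imp_right And.left))
  have hslope {a b : ℝ} (ha : x₀ ≤ a) (hab : a ≤ b) :=
    slope_bounds_of_upperBound_zeroSet_le hloc hAC hae hx₀.2 ha hab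
  obtain ⟨c, hc⟩ := hgrow
  rw [hx₀.csSup_eq]
  refine ⟨⟨hx₀.nonempty, hx₀.bddAbove, hx₀_neg⟩, k, by linarith,
    fun n => forwardAverage φ (n : ℝ)⁻¹, fun n hn => ?_, ?_⟩
  · have hh : 0 < (n : ℝ)⁻¹ := by positivity
    refine ⟨monotone_forwardAverage hmono hφ hh.le, contDiff_one_forwardAverage hφ _,
      fun x => ⟨le_forwardAverage hmono hh x, ?_⟩, fun x hx => ?_, fun x hx u hu => ?_⟩
    · calc forwardAverage φ (n : ℝ)⁻¹ x ≤ φ (x + (n : ℝ)⁻¹) := forwardAverage_le hmono hh x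
        _ ≤ φ x + k / n := by
          simpa [div_eq_mul_inv] using le_add_mul_of_slope_le hmono hpos hx₀.1 (by linarith)
            (fun a b ha hab => (hslope ha hab).2) x hh.le
    · obtain ⟨hlow, hhigh⟩ := hslope (b := x + (n : ℝ)⁻¹) hx (by linarith)
      rw [deriv_forwardAverage hφ, le_inv_mul_iff₀ hh, inv_mul_le_iff₀ hh]
      constructor <;> linarith
    · refine gen_forwardAverage_nonpos hA1 hA2 hF' hmean hu hloc hAC
        (fun z => (abs_of_nonneg (hpos z)).trans_le (hc z)) ?_ hx hh
      filter_upwards [hax_pos] with t ht ht0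
      exact ⟨zero_le_one.trans (ht ht0).1.1, (ht ht0).2 u hu⟩
  · exact (ae_tendsto_deriv_forwardAverage hloc hAC).mono fun x hx _ => hx

/-- Proposition 3.2, part 1.  A non-negative absolutely continuous
super-solution `φ` with `φ(0) > 0`, linear growth and `φ(y) ≤ c + y` on `[0,∞)` can be
approximated by a sequence of non-decreasing `C¹` functions `φ_n` with
`φ ≤ φ_n ≤ φ + c̃/n`, `φ_n' ∈ [1,k]` on `[x₀,∞)` (where `x₀ = sup{x : φ(x)=0} < 0`),
`φ_n' → φ'` a.e. on `[x₀,∞)`, and `𝓛^u φ_n ≤ 0` on `[0,∞)` for every retention policy. -/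
theorem supersolution_smooth_approximation
    (F : Measure ℝ) [IsProbabilityMeasure F] (hF : F (Iio 0) = 0)
    (hmean : Integrable (fun y : ℝ => y) F)
    (p : ℝ → ℝ → ℝ) (P1 : ℝ) (hA1 : AssumptionA1 p) (hA2 : AssumptionA2 F p P1)
    (lam q k : ℝ) (hlam : 0 < lam) (hq : 0 < q) (hk : 1 ≤ k)
    (φ φ' : ℝ → ℝ)
    (hpos : ∀ x : ℝ, 0 ≤ φ x)
    (hφ0 : 0 < φ 0)
    (hloc : ∀ a b : ℝ, IntervalIntegrable φ' volume a b)
    (hAC : ∀ a b : ℝ, φ b - φ a = ∫ t in a..b, φ' t)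
    (hgrow : ∃ c : ℝ, ∀ x : ℝ, φ x ≤ c * (1 + |x|))
    (hup : ∃ c : ℝ, ∀ y : ℝ, 0 ≤ y → φ y ≤ c + y)
    (hax_pos : ∀ᵐ x : ℝ ∂volume, 0 ≤ x → (1 ≤ φ' x ∧ φ' x ≤ k) ∧
      ∀ u : ℝ → ℝ, IsRetention u → gen F p lam q u φ φ' x ≤ 0)
    (hax_neg : ∀ᵐ x : ℝ ∂volume, x < 0 → (φ x = 0 ∨ (1 ≤ φ' x ∧ φ' x ≤ k))) :
    ({x : ℝ | φ x = 0}.Nonempty ∧ BddAbove {x : ℝ | φ x = 0} ∧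
        sSup {x : ℝ | φ x = 0} < 0) ∧
    ∃ ctil : ℝ, 0 ≤ ctil ∧ ∃ φn : ℕ → ℝ → ℝ,
      (∀ n : ℕ, 1 ≤ n →
        Monotone (φn n) ∧ ContDiff ℝ 1 (φn n) ∧
        (∀ x : ℝ, φ x ≤ φn n x ∧ φn n x ≤ φ x + ctil / n) ∧
        (∀ x : ℝ, sSup {y : ℝ | φ y = 0} ≤ x →
          1 ≤ deriv (φn n) x ∧ deriv (φn n) x ≤ k) ∧
        (∀ x : ℝ, 0 ≤ x → ∀ u : ℝ → ℝ, IsRetention u →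
          gen F p lam q u (φn n) (deriv (φn n)) x ≤ 0)) ∧
      (∀ᵐ x : ℝ ∂volume, sSup {y : ℝ | φ y = 0} ≤ x →
        Tendsto (fun n : ℕ => deriv (φn n) x) atTop (nhds (φ' x))) :=
  supersolution_smooth_approximation_general F hF hmean p P1 hA1 hA2 lam q k hk φ φ' hpos hφ0 hloc
    hAC hgrow hax_pos hax_neg
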